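/- Let t ∈ ℝ and define f(z,w) := z(1 + 2tw³), φ(z,w) := −4it·z²w², g(z,w) := w + tw⁴. Then for all (z,w) ∈ ℂ² with Im w = |z|² one has the identity (1 − |φ(z,w)|²)·Im g(z,w) − |f(z,w)|² − Re( f(z,w)²·conj(φ(z,w)) ) = −4t²·|z|²·|w|⁶. Consequently, for every open neighbourhood U of 0 in ℂ²: the map H_t = (f, φ, g) sends every point of ℍ³ ∩ U into the zero set of the defining function of 𝒳 if and only if t = 0. -/

import Mathlib

/-!
On the Heisenberg hypersurface, `ρ̃ ∘ H_t = -4 t² |z|² |w|⁶` is a direct computation in real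
coordinates, using `Im w = |z|²` to eliminate `Im w`. The curve `s ↦ (s, i s²)` lies in `ℍ³` and
reaches the origin through points with `z ≠ 0` and `w ≠ 0`, so `ρ̃ ∘ H_t` vanishes on `ℍ³` near
the origin only when `t = 0`.
-/

open Complex ComplexConjugate Filter Topology

/-- The defining function `ρ̃` of the rational model `𝒳` of the tube over the future light cone. -/
noncomputable def tubeDefiningFunction (z ζ w : ℂ) : ℝ :=
  (1 - ‖ζ‖ ^ 2) * w.im - ‖z‖ ^ 2 - (z ^ 2 * conj ζ).re

theorem tubeDefiningFunction_quarticMap (t : ℝ) {z w : ℂ} (h : w.im = ‖z‖ ^ 2) :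
    tubeDefiningFunction (z * (1 + 2 * t * w ^ 3)) (-4 * I * t * z ^ 2 * w ^ 2) (w + t * w ^ 4)
      = -4 * t ^ 2 * ‖z‖ ^ 2 * ‖w‖ ^ 6 := by
  have hw : w.im = z.re ^ 2 + z.im ^ 2 := by rw [h, Complex.sq_norm, normSq_apply]; ring
  rw [tubeDefiningFunction, show ‖w‖ ^ 6 = (‖w‖ ^ 2) ^ 3 by ring]
  simp only [Complex.sq_norm]
  simp only [normSq_apply, mul_re, mul_im, add_re, add_im, one_re, one_im, I_re, I_im,
    ofReal_re, ofReal_im, neg_re, neg_im, conj_re, conj_im, pow_succ, pow_zero, one_mul,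
    re_ofNat, im_ofNat]
  rw [hw]
  ring

theorem exists_mem_heisenberg_ne_zero {U : Set (ℂ × ℂ)} (hU : U ∈ 𝓝 (0, 0)) :
    ∃ z w : ℂ, (z, w) ∈ U ∧ w.im = ‖z‖ ^ 2 ∧ z ≠ 0 ∧ w ≠ 0 := by
  have hcurve : Tendsto (fun s : ℝ => ((s : ℂ), I * (s : ℂ) ^ 2)) (𝓝[≠] 0) (𝓝 (0, 0)) := by
    refine tendsto_nhdsWithin_of_tendsto_nhds ?_
    have : Continuous (fun s : ℝ => ((s : ℂ), I * (s : ℂ) ^ 2)) := by fun_prop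
    simpa using this.tendsto 0
  obtain ⟨s, hsU, hs⟩ := ((hcurve.eventually hU).and self_mem_nhdsWithin).exists
  have hs' : (s : ℂ) ≠ 0 := ofReal_ne_zero.mpr hs
  refine ⟨s, I * (s : ℂ) ^ 2, hsU, ?_, hs', mul_ne_zero I_ne_zero (pow_ne_zero 2 hs')⟩
  simp [← ofReal_pow, norm_real]

/-- For `t ∈ ℝ`, `f(z,w) = z(1+2tw³)`, `φ(z,w) = −4it·z²w²`,
`g(z,w) = w + tw⁴`, one has, for all `(z,w)` with `Im w = |z|²`,
`(1 − |φ|²)·Im g − |f|² − Re(f²·conj φ) = −4t²·|z|²·|w|⁶`.  Consequently, for every open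
neighbourhood `U` of `0` in `ℂ²`, the map `H_t = (f,φ,g)` sends every point of
`ℍ³ ∩ U` into the zero set of the defining function of `𝒳` if and only if `t = 0`. -/
theorem Ht_quartic_example (t : ℝ) :
    (∀ z w : ℂ, w.im = ‖z‖ ^ 2 →
      (1 - ‖-4 * Complex.I * (t : ℂ) * z ^ 2 * w ^ 2‖ ^ 2) *
          (w + (t : ℂ) * w ^ 4).im
        - ‖z * (1 + 2 * (t : ℂ) * w ^ 3)‖ ^ 2
        - ((z * (1 + 2 * (t : ℂ) * w ^ 3)) ^ 2 *
            (starRingEnd ℂ) (-4 * Complex.I * (t : ℂ) * z ^ 2 * w ^ 2)).re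
      = -4 * t ^ 2 * ‖z‖ ^ 2 * ‖w‖ ^ 6) ∧
    (∀ U : Set (ℂ × ℂ), IsOpen U → (0, 0) ∈ U →
      ((∀ p ∈ U, p.2.im = ‖p.1‖ ^ 2 →
          (1 - ‖-4 * Complex.I * (t : ℂ) * p.1 ^ 2 * p.2 ^ 2‖ ^ 2) *
              (p.2 + (t : ℂ) * p.2 ^ 4).im
            - ‖p.1 * (1 + 2 * (t : ℂ) * p.2 ^ 3)‖ ^ 2
            - ((p.1 * (1 + 2 * (t : ℂ) * p.2 ^ 3)) ^ 2 *
                (starRingEnd ℂ) (-4 * Complex.I * (t : ℂ) * p.1 ^ 2 * p.2 ^ 2)).re = 0)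
        ↔ t = 0)) := by
  have hid {z w : ℂ} (h : w.im = ‖z‖ ^ 2) := tubeDefiningFunction_quarticMap t h
  simp only [tubeDefiningFunction] at hid
  refine ⟨fun z w h => hid h, fun U hU h0 => ⟨fun hzero => ?_, ?_⟩⟩
  · obtain ⟨z, w, hzwU, hzw, hz, hw⟩ := exists_mem_heisenberg_ne_zero (hU.mem_nhds h0)
    have hρ := hzero (z, w) hzwU hzw
    rw [hid hzw] at hρ
    simpa [hz, hw] using hρ
  · rintro rfl p - hp
    rw [hid hp]
    ring
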